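/- Let G(u,v) = (u + u²v − u²v², v). For p ≥ 2, the largest integer κ such that every polynomial ψ(x,y) of total degree ≤ κ satisfies ψ ∘ G ∈ ℚ^p is κ = ⌊p/2⌋. -/

import Mathlib

/-- `f` is a polynomial of degree at most `k` in each of the two variables
(i.e. it lies in the tensor-product space `ℚ^k`). -/
def QdegLE (k : ℕ) (f : ℝ → ℝ → ℝ) : Prop :=
  ∃ q : MvPolynomial (Fin 2) ℝ, (∀ i, q.degreeOf i ≤ k) ∧
    ∀ u v : ℝ, MvPolynomial.eval ![u, v] q = f u v

/-!
Each component of `G` has degree at most two in each variable, so `ψ ∘ G ∈ ℚ^{2κ}` whenever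
`ψ` has total degree `κ`. Conversely `x^κ ∘ G = (u + u²(v - v²))^κ` has degree exactly `2κ` in `u`,
and a polynomial function on `ℝ²` determines its polynomial, so `x^κ ∘ G ∉ ℚ^p` once `2κ > p`.
-/

open MvPolynomial

namespace MvPolynomial

variable {R σ τ : Type*} [CommSemiring R]

theorem degreeOf_aeval_le {g : σ → MvPolynomial τ R} {i : τ} {m : ℕ}
    (hg : ∀ j, degreeOf i (g j) ≤ m) (ψ : MvPolynomial σ R) :
    degreeOf i (aeval g ψ) ≤ m * ψ.totalDegree := by
  classical
  conv_lhs => rw [ψ.as_sum]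
  rw [map_sum]
  refine (degreeOf_sum_le _ _ _).trans (Finset.sup_le fun d hd => ?_)
  rw [aeval_monomial, Finsupp.prod]
  calc degreeOf i (algebraMap R _ (coeff d ψ) * ∏ j ∈ d.support, g j ^ d j)
      ≤ degreeOf i (C (coeff d ψ)) + ∑ j ∈ d.support, degreeOf i (g j ^ d j) :=
        (degreeOf_mul_le _ _ _).trans (add_le_add le_rfl (degreeOf_prod_le _ _ _))
    _ ≤ ∑ j ∈ d.support, d j * m := by
        rw [degreeOf_C, zero_add]
        exact Finset.sum_le_sum fun j _ =>
          (degreeOf_pow_le _ _ _).trans (Nat.mul_le_mul_left _ (hg j))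
    _ = m * d.degree := by rw [Finsupp.degree_apply, mul_comm, Finset.sum_mul]
    _ ≤ m * ψ.totalDegree := Nat.mul_le_mul_left _ (le_totalDegree hd)

end MvPolynomial

theorem qdegLE_eval_iff (k : ℕ) (q : MvPolynomial (Fin 2) ℝ) :
    QdegLE k (fun u v => eval ![u, v] q) ↔ ∀ i, q.degreeOf i ≤ k := by
  refine ⟨fun ⟨q', hdeg, heval⟩ => ?_, fun h => ⟨q, h, fun _ _ => rfl⟩⟩
  obtain rfl : q' = q := MvPolynomial.funext fun x => by
    have hx : ![x 0, x 1] = x := List.ofFn_inj.mp rfl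
    simpa only [hx] using heval (x 0) (x 1)
  exact hdeg

noncomputable def G : Fin 2 → MvPolynomial (Fin 2) ℝ :=
  ![X 0 + X 0 ^ 2 * X 1 - X 0 ^ 2 * X 1 ^ 2, X 1]

theorem eval_aeval_G (ψ : MvPolynomial (Fin 2) ℝ) (u v : ℝ) :
    eval ![u, v] (aeval G ψ) = eval ![u + u ^ 2 * v - u ^ 2 * v ^ 2, v] ψ := by
  rw [aeval_eq_bind₁]
  refine (eval₂Hom_bind₁ _ _ _ _).trans (congrArg (eval · ψ) ?_)
  funext j
  fin_cases j <;> simp [G]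

theorem degreeOf_G_le (i j : Fin 2) : degreeOf i (G j) ≤ 2 := by
  have hX : ∀ k, degreeOf i (X k : MvPolynomial (Fin 2) ℝ) ≤ 1 := fun k => by
    classical
    rw [degreeOf_X]
    split_ifs <;> simp
  fin_cases j
  · refine (degreeOf_sub_le _ _ _).trans
      (max_le ((degreeOf_add_le _ _ _).trans (max_le ((hX 0).trans one_le_two) ?_)) ?_)
    all_goals
      refine (degreeOf_mul_le _ _ _).trans ?_
      fin_cases i <;> simp [degreeOf_X_of_ne, degreeOf_X_pow_of_ne]
  · exact (hX 1).trans one_le_two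

theorem degreeOf_zero_G_zero : degreeOf 0 (G 0) = 2 := by
  have hX1 : finSuccEquiv ℝ 1 (X 1) = Polynomial.C (X 0) := finSuccEquiv_X_succ (j := 0)
  have hG : finSuccEquiv ℝ 1 (G 0) =
      Polynomial.C (X 0 - X 0 ^ 2) * Polynomial.X ^ 2 + Polynomial.C 1 * Polynomial.X +
        Polynomial.C 0 := by
    simp only [G, Matrix.cons_val_zero, map_add, map_sub, map_mul, map_pow, finSuccEquiv_X_zero,
      hX1, map_one, map_zero]
    ring
  rw [← natDegree_finSuccEquiv, hG, Polynomial.natDegree_quadratic]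
  intro h
  have := congrArg (eval ![(2 : ℝ)]) h
  norm_num at this

theorem degreeOf_zero_aeval_G_X_zero_pow (n : ℕ) :
    degreeOf 0 (aeval G (X 0 ^ n : MvPolynomial (Fin 2) ℝ)) = 2 * n := by
  have hG0 : G 0 ≠ 0 := fun h => by simpa [h] using degreeOf_zero_G_zero
  rw [map_pow, aeval_X, degreeOf_pow_eq _ _ _ hG0, degreeOf_zero_G_zero, mul_comm]

theorem reproduction_degree_of_G_general (p : ℕ) :
    IsGreatest
      {κ : ℕ | ∀ ψ : MvPolynomial (Fin 2) ℝ, ψ.totalDegree ≤ κ →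
        QdegLE p (fun u v =>
          MvPolynomial.eval ![u + u ^ 2 * v - u ^ 2 * v ^ 2, v] ψ)}
      (p / 2) := by
  have hcomp (ψ : MvPolynomial (Fin 2) ℝ) :
      (fun u v => eval ![u + u ^ 2 * v - u ^ 2 * v ^ 2, v] ψ) =
        fun u v => eval ![u, v] (aeval G ψ) := by
    funext u v
    exact (eval_aeval_G ψ u v).symm
  simp only [hcomp, qdegLE_eval_iff]
  refine ⟨fun ψ hψ i => (degreeOf_aeval_le (degreeOf_G_le i) ψ).trans (by omega), fun κ hκ => ?_⟩
  by_contra! hlt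
  have hdeg := hκ (X 0 ^ (p / 2 + 1)) (by rw [totalDegree_X_pow]; omega) 0
  rw [degreeOf_zero_aeval_G_X_zero_pow] at hdeg
  omega

/-- For `G(u,v) = (u + u²v − u²v², v)` and `p ≥ 2`, the largest `κ` such that every
polynomial `ψ(x,y)` of total degree `≤ κ` satisfies `ψ ∘ G ∈ ℚ^p` is `κ = ⌊p/2⌋`. -/
theorem reproduction_degree_of_G (p : ℕ) (hp : 2 ≤ p) :
    IsGreatest
      {κ : ℕ | ∀ ψ : MvPolynomial (Fin 2) ℝ, ψ.totalDegree ≤ κ →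
        QdegLE p (fun u v =>
          MvPolynomial.eval ![u + u ^ 2 * v - u ^ 2 * v ^ 2, v] ψ)}
      (p / 2) :=
  reproduction_degree_of_G_general p
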